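/- Let $u_0: B_r \to (0,\infty)$ be continuous on a ball $B_r \subset \mathbb{R}^n$, $n \ge 3$, and suppose that for every ball $B_\lambda(x) \subset B_r$ and every $y \in B_r \setminus B_\lambda(x)$, the Kelvin transform satisfies $(u_0)_{x,\lambda}(y) := \left(\frac{\lambda}{|y-x|}\right)^{n-2} u_0\left(x + \frac{\lambda^2(y-x)}{|y-x|^2}\right) \le u_0(y)$. Then $\ln u_0$ is locally Lipschitz in $B_r$ and $|\nabla \ln u_0(x)| \le \frac{n-2}{r - |x|}$ for almost every $x \in B_r$. -/

import Mathlib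

/-!
Fix `y ≠ z` and `t > 0`, put `d = |y - z|`, and let `x` be the point on the ray from `y` through `z`
at distance `t` beyond `z`. The sphere around `x` of radius `λ = √(t (t + d))` inverts `y` to `z`,
so the Kelvin inequality at `y` reads `(λ / (d + t))^(n-2) u(z) ≤ u(y)`, that is
`ln u(z) - ln u(y) ≤ (n-2)/2 · ln (1 + d/t) ≤ (n-2) d / (2t)`.
The ball `B_λ(x)` stays within `2t + d/2` of `z`, so near a point at distance `R` from `∂B_r`
this makes `ln u` Lipschitz with any constant `(n-2)/(2t)`, `2t < R`, whence `|∇ ln u| ≤ (n-2)/R`.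
-/

open MeasureTheory Real Metric

variable {E : Type*} [NormedAddCommGroup E] [NormedSpace ℝ E]

/-- `u_{x,λ}` with weight exponent `α`, which is `n - 2` in `ℝⁿ`. -/
noncomputable def kelvinTransform (α : ℝ) (u : E → ℝ) (x : E) (lam : ℝ) (y : E) : ℝ :=
  (lam / ‖y - x‖) ^ α * u (x + (lam ^ 2 / ‖y - x‖ ^ 2) • (y - x))

def DominatesKelvinTransforms (α : ℝ) (s : Set E) (u : E → ℝ) : Prop :=
  ∀ (x : E) (lam : ℝ), 0 < lam → ball x lam ⊆ s → ∀ y ∈ s, lam ≤ ‖y - x‖ →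
    kelvinTransform α u x lam y ≤ u y

theorem exists_sphere_inverting {y z : E} (hyz : y ≠ z) {t : ℝ} (ht : 0 < t) :
    ∃ x lam, 0 < lam ∧ lam ^ 2 = t * (t + dist y z) ∧ ‖y - x‖ = dist y z + t ∧
      ball x lam ⊆ ball z (2 * t + dist y z / 2) ∧
      x + (lam ^ 2 / ‖y - x‖ ^ 2) • (y - x) = z := by
  set d := dist y z
  have hd : 0 < d := dist_pos.2 hyz
  have hnorm : ‖y - z‖ = d := (dist_eq_norm y z).symm
  set x := z - (t / d) • (y - z)
  have hyx : y - x = ((d + t) / d) • (y - z) := by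
    rw [add_div, div_self hd.ne', add_smul, one_smul]; module
  have hnyx : ‖y - x‖ = d + t := by
    rw [hyx, norm_smul, hnorm, norm_of_nonneg (by positivity), div_mul_cancel₀ _ hd.ne']
  have hlam : √(t * (t + d)) ^ 2 = t * (t + d) := sq_sqrt (by positivity)
  refine ⟨x, √(t * (t + d)), by positivity, hlam, hnyx, ?_, ?_⟩
  · refine ball_subset_ball' ?_
    have hlam_le : √(t * (t + d)) ≤ t + d / 2 := (sqrt_le_left (by positivity)).2 (by nlinarith)
    have hdist : dist x z = t := by
      rw [dist_eq_norm, sub_sub_cancel_left, norm_neg, norm_smul, hnorm,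
        norm_of_nonneg (by positivity), div_mul_cancel₀ _ hd.ne']
    linarith
  · have hcoef : t * (t + d) / (d + t) ^ 2 * ((d + t) / d) = t / d := by
      field_simp; ring
    rw [hlam, hnyx, hyx, smul_smul, hcoef, sub_add_cancel]

theorem neg_div_le_log_div {t d lam : ℝ} (ht : 0 < t) (hd : 0 ≤ d)
    (hlam_sq : lam ^ 2 = t * (t + d)) : -(d / (2 * t)) ≤ log (lam / (d + t)) := by
  have hsq : 2 * log (lam / (d + t)) = log (t / (t + d)) := by
    have h := log_pow (lam / (d + t)) 2
    push_cast at h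
    rw [← h, div_pow, hlam_sq, add_comm d]
    congr 1
    field_simp
  have hlog := one_sub_inv_le_log_of_pos (show 0 < t / (t + d) by positivity)
  have : (t / (t + d))⁻¹ = 1 + d / t := by field_simp
  have : d / (2 * t) = d / t / 2 := by ring
  linarith

namespace DominatesKelvinTransforms

variable {α : ℝ} {s : Set E} {u : E → ℝ}

theorem log_sub_log_le (h : DominatesKelvinTransforms α s u) (hα : 0 ≤ α)
    (hpos : ∀ y ∈ s, 0 < u y) {y z : E} (hy : y ∈ s) {t : ℝ} (ht : 0 < t)
    (hball : ball z (2 * t + dist y z / 2) ⊆ s) :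
    log (u z) - log (u y) ≤ α / (2 * t) * dist y z := by
  rcases eq_or_ne y z with rfl | hyz
  · simp
  obtain ⟨x, lam, hlam, hlam_sq, hyx, hsub, hinv⟩ := exists_sphere_inverting hyz ht
  have hz : z ∈ s := hball (mem_ball_self (by positivity))
  have hlam_le : lam ≤ ‖y - x‖ := by
    rw [hyx]; nlinarith [dist_nonneg (x := y) (y := z)]
  have hkel := h x lam hlam (hsub.trans hball) y hy hlam_le
  rw [kelvinTransform, hinv, hyx] at hkel
  have hratio : 0 < lam / (dist y z + t) := by positivity
  have hlog := log_le_log (by have := hpos z hz; positivity) hkel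
  rw [log_mul (by positivity) (hpos z hz).ne', log_rpow hratio] at hlog
  have := mul_le_mul_of_nonneg_left (neg_div_le_log_div ht dist_nonneg hlam_sq) hα
  rw [div_mul_eq_mul_div, mul_div_assoc]
  linarith

theorem lipschitzOnWith_log (h : DominatesKelvinTransforms α s u) (hα : 0 ≤ α)
    (hpos : ∀ y ∈ s, 0 < u y) {x : E} {ε t : ℝ} (ht : 0 < t)
    (hball : ball x (2 * t + 2 * ε) ⊆ s) :
    LipschitzOnWith (α / (2 * t)).toNNReal (fun y => log (u y)) (ball x ε) := by
  have hone_sided : ∀ y ∈ ball x ε, ∀ z ∈ ball x ε,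
      log (u z) - log (u y) ≤ α / (2 * t) * dist y z := by
    intro y hy z hz
    have hys : y ∈ s := hball (ball_subset_ball (by linarith [pos_of_mem_ball hy]) hy)
    refine h.log_sub_log_le hα hpos hys ht ((ball_subset_ball' ?_).trans hball)
    have := dist_triangle_right y z x
    rw [mem_ball] at hy hz
    linarith
  refine LipschitzOnWith.of_dist_le_mul fun y hy z hz => ?_
  rw [coe_toNNReal _ (by positivity), Real.dist_eq, abs_sub_le_iff]
  exact ⟨dist_comm y z ▸ hone_sided z hz y hy, hone_sided y hy z hz⟩

theorem locallyLipschitzOn_log (h : DominatesKelvinTransforms α s u) (hα : 0 ≤ α)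
    (hpos : ∀ y ∈ s, 0 < u y) (hs : IsOpen s) : LocallyLipschitzOn s (fun y => log (u y)) := by
  intro x hx
  obtain ⟨ε, hε, hεs⟩ := isOpen_iff.1 hs x hx
  refine ⟨_, ball x (ε / 4), mem_nhdsWithin_of_mem_nhds (ball_mem_nhds x (by positivity)),
    h.lipschitzOnWith_log hα hpos (t := ε / 4) (by positivity) ?_⟩
  convert hεs using 2
  ring

theorem norm_fderiv_log_le (h : DominatesKelvinTransforms α s u) (hα : 0 ≤ α)
    (hpos : ∀ y ∈ s, 0 < u y) {x : E} {R : ℝ} (hR : 0 < R) (hball : ball x R ⊆ s) :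
    ‖fderiv ℝ (fun y => log (u y)) x‖ ≤ α / R := by
  by_cases hdiff : DifferentiableAt ℝ (fun y => log (u y)) x
  · have hbound : ∀ c ∈ Set.Ioo 0 R, ‖fderiv ℝ (fun y => log (u y)) x‖ ≤ α / c := by
      rintro c ⟨hc, hcR⟩
      have hlip := h.lipschitzOnWith_log hα hpos (x := x) (ε := (R - c) / 2) (t := c / 2)
        (by positivity) (by convert hball using 2; ring)
      have := hdiff.hasFDerivAt.le_of_lipschitzOn (ball_mem_nhds x (by linarith)) hlip
      rwa [coe_toNNReal _ (by positivity), mul_div_cancel₀ _ two_ne_zero] at this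
    refine ge_of_tendsto ?_ (Filter.eventually_of_mem (Ioo_mem_nhdsLT hR) hbound)
    exact ((continuousAt_const.div continuousAt_id hR.ne').tendsto).mono_left nhdsWithin_le_nhds
  · rw [fderiv_zero_of_not_differentiableAt hdiff, norm_zero]
    positivity

end DominatesKelvinTransforms

theorem log_gradient_bound_from_kelvin_general (n : ℕ) (hn : 3 ≤ n) (r : ℝ)
    (u0 : EuclideanSpace ℝ (Fin n) → ℝ)
    (hpos : ∀ y ∈ Metric.ball (0 : EuclideanSpace ℝ (Fin n)) r, 0 < u0 y)
    (hkelvin : ∀ (x : EuclideanSpace ℝ (Fin n)) (lam : ℝ), 0 < lam →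
      Metric.ball x lam ⊆ Metric.ball (0 : EuclideanSpace ℝ (Fin n)) r →
      ∀ y ∈ Metric.ball (0 : EuclideanSpace ℝ (Fin n)) r, lam ≤ ‖y - x‖ →
        (lam / ‖y - x‖) ^ (((n : ℝ)) - 2) * u0 (x + (lam ^ 2 / ‖y - x‖ ^ 2) • (y - x))
          ≤ u0 y) :
    LocallyLipschitzOn (Metric.ball (0 : EuclideanSpace ℝ (Fin n)) r)
        (fun x => Real.log (u0 x)) ∧
      ∀ᵐ x : EuclideanSpace ℝ (Fin n), x ∈ Metric.ball (0 : EuclideanSpace ℝ (Fin n)) r →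
        ‖fderiv ℝ (fun y => Real.log (u0 y)) x‖ ≤ ((n : ℝ) - 2) / (r - ‖x‖) := by
  have hdom : DominatesKelvinTransforms ((n : ℝ) - 2) (ball 0 r) u0 := hkelvin
  have hα : (0 : ℝ) ≤ n - 2 := by
    have : (3 : ℝ) ≤ n := by exact_mod_cast hn
    linarith
  refine ⟨hdom.locallyLipschitzOn_log hα hpos isOpen_ball, ae_of_all _ fun x hx => ?_⟩
  -- `fderiv` is `0` wherever `ln u0` is not differentiable, so the bound holds at every point.
  rw [mem_ball_zero_iff] at hx
  exact hdom.norm_fderiv_log_le hα hpos (sub_pos.2 hx)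
    (ball_subset_ball' (by rw [dist_zero_right, sub_add_cancel]))

/-- Li–Li, Li–Nguyen: if a positive continuous function `u₀` on the ball
`B_r ⊂ ℝ^n` is bounded below by all its Kelvin transforms
`(u₀)_{x,λ}(y) = (λ/|y-x|)^{n-2} u₀(x + λ²(y-x)/|y-x|²)` for spheres contained in `B_r`,
then `ln u₀` is locally Lipschitz in `B_r` and `|∇ ln u₀(x)| ≤ (n-2)/(r-|x|)` a.e. -/
theorem log_gradient_bound_from_kelvin (n : ℕ) (hn : 3 ≤ n) (r : ℝ) (hr : 0 < r)
    (u0 : EuclideanSpace ℝ (Fin n) → ℝ)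
    (hcont : ContinuousOn u0 (Metric.ball (0 : EuclideanSpace ℝ (Fin n)) r))
    (hpos : ∀ y ∈ Metric.ball (0 : EuclideanSpace ℝ (Fin n)) r, 0 < u0 y)
    (hkelvin : ∀ (x : EuclideanSpace ℝ (Fin n)) (lam : ℝ), 0 < lam →
      Metric.ball x lam ⊆ Metric.ball (0 : EuclideanSpace ℝ (Fin n)) r →
      ∀ y ∈ Metric.ball (0 : EuclideanSpace ℝ (Fin n)) r, lam ≤ ‖y - x‖ →
        (lam / ‖y - x‖) ^ (((n : ℝ)) - 2) * u0 (x + (lam ^ 2 / ‖y - x‖ ^ 2) • (y - x))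
          ≤ u0 y) :
    LocallyLipschitzOn (Metric.ball (0 : EuclideanSpace ℝ (Fin n)) r)
        (fun x => Real.log (u0 x)) ∧
      ∀ᵐ x : EuclideanSpace ℝ (Fin n), x ∈ Metric.ball (0 : EuclideanSpace ℝ (Fin n)) r →
        ‖fderiv ℝ (fun y => Real.log (u0 y)) x‖ ≤ ((n : ℝ) - 2) / (r - ‖x‖) :=
  log_gradient_bound_from_kelvin_general n hn r u0 hpos hkelvin
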